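/- arXiv:1512.02369 — 6 statements merged into one kernel-verified Lean document; each statement's English description precedes it below -/
import Mathlib

section
/- Let Q be a symmetric positive semidefinite n×n real matrix, c ∈ ℝⁿ, and q(x) = xᵀQx + cᵀx. Let g(x) = 2Qx + c. Fix ε with 0 < ε < 1/(2·λ_max(Q)), where λ_max(Q) is the largest eigenvalue of Q. Given z ∈ ℝⁿ with z ≥ 0, define A(z) = {i : z_i ≤ ε·g_i(z)} and let y be defined by y_i = 0 for i ∈ A(z) and y_i = z_i otherwise. Then q(y) − q(z) ≤ −(1/(2ε))·‖y − z‖². -/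
/-!
Write `y = z + d`. Then `q y - q z = dᵀ Q d + g(z)ᵀ d`. On the active set `d_i = -z_i` with
`z_i ≤ ε g_i(z)`, so `g_i(z) d_i ≤ -d_i² / ε`, and off it `d_i = 0`; hence `g(z)ᵀ d ≤ -‖d‖² / ε`.
The quadratic term is at most `λ_max ‖d‖² < ‖d‖² / (2ε)`, which leaves `-‖d‖² / (2ε)`.
-/

open Matrix Finset

namespace Matrix

variable {ι : Type*} [Fintype ι]

theorem IsHermitian.posSemidef_algebraMap_sub [DecidableEq ι] {Q : Matrix ι ι ℝ}
    (hQ : Q.IsHermitian) {μ : ℝ} (hμ : ∀ i, hQ.eigenvalues i ≤ μ) :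
    (algebraMap ℝ _ μ - Q).PosSemidef := by
  have hM : (algebraMap ℝ (Matrix ι ι ℝ) μ - Q).IsHermitian := (isHermitian_diagonal _).sub hQ
  rw [hM.posSemidef_iff_eigenvalues_nonneg]
  intro i
  have hi := hM.eigenvalues_mem_spectrum_real i
  rw [← spectrum.singleton_sub_eq, hQ.spectrum_real_eq_range_eigenvalues] at hi
  obtain ⟨_, rfl, _, ⟨j, rfl⟩, hij⟩ := hi
  simpa [← hij] using hμ j

theorem IsHermitian.dotProduct_mulVec_le [DecidableEq ι] {Q : Matrix ι ι ℝ}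
    (hQ : Q.IsHermitian) {μ : ℝ} (hμ : ∀ i, hQ.eigenvalues i ≤ μ) (x : ι → ℝ) :
    x ⬝ᵥ (Q *ᵥ x) ≤ μ * (x ⬝ᵥ x) := by
  have h := (hQ.posSemidef_algebraMap_sub hμ).dotProduct_mulVec_nonneg x
  rwa [star_trivial, sub_mulVec, dotProduct_sub, sub_nonneg, Algebra.algebraMap_eq_smul_one,
    smul_mulVec, one_mulVec, dotProduct_smul, smul_eq_mul] at h

theorem IsSymm.dotProduct_mulVec_add {R : Type*} [CommRing R] {Q : Matrix ι ι R}
    (hQ : Q.IsSymm) (z d : ι → R) :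
    (z + d) ⬝ᵥ (Q *ᵥ (z + d)) = z ⬝ᵥ (Q *ᵥ z) + (2 : R) • (Q *ᵥ z) ⬝ᵥ d + d ⬝ᵥ (Q *ᵥ d) := by
  have hcomm : z ⬝ᵥ (Q *ᵥ d) = (Q *ᵥ z) ⬝ᵥ d := by
    rw [dotProduct_mulVec, ← mulVec_transpose, hQ.eq]
  simp only [mulVec_add, dotProduct_add, add_dotProduct, smul_dotProduct, smul_eq_mul, hcomm]
  rw [dotProduct_comm d (Q *ᵥ z)]
  ring

end Matrix

theorem mul_sub_le_of_active {ε z g : ℝ} (hε : 0 < ε) (hz : 0 ≤ z) :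
    g * ((if z ≤ ε * g then 0 else z) - z) ≤ -(1 / ε) * ((if z ≤ ε * g then 0 else z) - z) ^ 2 := by
  split_ifs with h
  · have : z * z ≤ ε * g * z := mul_le_mul_of_nonneg_right h hz
    rw [show -(1 / ε) * (0 - z) ^ 2 = -(z * z) / ε by ring, neg_div, le_neg, ← neg_mul,
      div_le_iff₀ hε]
    linarith
  · simp

theorem lt_one_div_two_mul_of_lt {ε L : ℝ} (hε : 0 < ε) (h : ε < 1 / (2 * L)) :
    L < 1 / (2 * ε) := by
  have hL : 0 < 2 * L := by
    by_contra! hL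
    exact (one_div_nonpos.mpr hL).not_gt (hε.trans h)
  rw [lt_div_iff₀ hL] at h
  rw [lt_div_iff₀ (by positivity)]
  linarith

theorem stmt_0_general {n : ℕ} (Q : Matrix (Fin n) (Fin n) ℝ) (hQ : Q.PosSemidef)
    (c : Fin n → ℝ)
    (q : (Fin n → ℝ) → ℝ) (hq : ∀ x, q x = x ⬝ᵥ (Q *ᵥ x) + c ⬝ᵥ x)
    (g : (Fin n → ℝ) → (Fin n → ℝ)) (hg : ∀ x, g x = (2 : ℝ) • (Q *ᵥ x) + c)
    (ε : ℝ) (hε : 0 < ε) (hεlt : ε < 1 / (2 * ⨆ i, hQ.1.eigenvalues i))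
    (z : Fin n → ℝ) (hz : ∀ i, 0 ≤ z i)
    (y : Fin n → ℝ) (hy : ∀ i, y i = if z i ≤ ε * g z i then 0 else z i) :
    q y - q z ≤ -(1 / (2 * ε)) * ∑ i, (y i - z i) ^ 2 := by
  set d := y - z
  have hnorm : ∑ i, (y i - z i) ^ 2 = d ⬝ᵥ d := by simp [d, dotProduct, sq]
  have hexpand : q y - q z = d ⬝ᵥ (Q *ᵥ d) + g z ⬝ᵥ d := by
    rw [show y = z + d by simp [d], hq, hq, hg,
      (isHermitian_iff_isSymm.mp hQ.1).dotProduct_mulVec_add, dotProduct_add, add_dotProduct]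
    ring
  have hlin : g z ⬝ᵥ d ≤ -(1 / ε) * (d ⬝ᵥ d) := by
    simp only [dotProduct, mul_sum, ← sq]
    refine sum_le_sum fun i _ => ?_
    simpa only [d, Pi.sub_apply, hy i] using mul_sub_le_of_active hε (hz i)
  have hquad : d ⬝ᵥ (Q *ᵥ d) ≤ 1 / (2 * ε) * (d ⬝ᵥ d) := by
    refine hQ.1.dotProduct_mulVec_le (fun i => ?_) d
    exact (le_ciSup (Set.finite_range _).bddAbove i).trans
      (lt_one_div_two_mul_of_lt hε hεlt).le
  calc q y - q z ≤ 1 / (2 * ε) * (d ⬝ᵥ d) + -(1 / ε) * (d ⬝ᵥ d) := by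
        rw [hexpand]; exact add_le_add hquad hlin
    _ = -(1 / (2 * ε)) * ∑ i, (y i - z i) ^ 2 := by rw [hnorm]; ring

/-- Sufficient decrease obtained by fixing the estimated active variables to zero. -/
theorem stmt_0 {n : ℕ} (hn : 0 < n) (Q : Matrix (Fin n) (Fin n) ℝ) (hQ : Q.PosSemidef)
    (c : Fin n → ℝ)
    (q : (Fin n → ℝ) → ℝ) (hq : ∀ x, q x = x ⬝ᵥ (Q *ᵥ x) + c ⬝ᵥ x)
    (g : (Fin n → ℝ) → (Fin n → ℝ)) (hg : ∀ x, g x = (2 : ℝ) • (Q *ᵥ x) + c)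
    (ε : ℝ) (hε : 0 < ε) (hεlt : ε < 1 / (2 * ⨆ i, hQ.1.eigenvalues i))
    (z : Fin n → ℝ) (hz : ∀ i, 0 ≤ z i)
    (y : Fin n → ℝ) (hy : ∀ i, y i = if z i ≤ ε * g z i then 0 else z i) :
    q y - q z ≤ -(1 / (2 * ε)) * ∑ i, (y i - z i) ^ 2 :=
  stmt_0_general Q hQ c q hq g hg ε hε hεlt z hz y hy
end

section
/- Let Q be symmetric positive semidefinite, c ∈ ℝⁿ, and suppose the problem min { xᵀQx + cᵀx : x ≥ 0 } is unbounded below. Then there exists d ∈ ℝⁿ with d ≥ 0, Qd = 0, and cᵀd < 0. -/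
/-!
Rescaling points of the orthant on which the objective is very negative gives, for every
`ε > 0`, points `z ≥ 0` with `cᵀz = -1` and `zᵀQz ≤ ε`. For `ε = 1/(k+1)` pick one with least
coordinate sum `s`, and let `u` be a limit point of `z / (1 + s)`. Then `u ≥ 0`, `Qu = 0` and
`cᵀu = ∑ uᵢ - 1 ≤ 0`. If `cᵀu` were `0`, then `∑ uᵢ = 1` and `u/2 ≤ z` for one of the chosen `z`;
as `Q(u/2) = 0` and `cᵀ(u/2) = 0`, `z - u/2` would be an admissible point of smaller coordinate sum.
-/

open Matrix Filter Topology

section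

variable {ι : Type*} [Fintype ι]

lemma isCompact_setOf_nonneg_sum_le (B : ℝ) : IsCompact {x : ι → ℝ | 0 ≤ x ∧ ∑ i, x i ≤ B} := by
  refine (isCompact_Icc (a := 0) (b := fun _ => B)).of_isClosed_subset ?_
    fun x hx => ⟨hx.1, fun i => ?_⟩
  · exact (isClosed_le continuous_const continuous_id).inter
      (isClosed_le (continuous_finsetSum _ fun i _ => continuous_apply i) continuous_const)
  · exact (Finset.single_le_sum (fun j _ => hx.1 j) (Finset.mem_univ i)).trans hx.2

lemma exists_isMinOn_sum_of_isClosed {S : Set (ι → ℝ)} (hS : IsClosed S) (hne : S.Nonempty)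
    (hS0 : ∀ x ∈ S, 0 ≤ x) : ∃ z ∈ S, IsMinOn (fun x => ∑ i, x i) S z := by
  obtain ⟨x₀, hx₀⟩ := hne
  set K := S ∩ {x | 0 ≤ x ∧ ∑ i, x i ≤ ∑ i, x₀ i}
  have hK : IsCompact K :=
    (isCompact_setOf_nonneg_sum_le _).of_isClosed_subset
      (hS.inter (isCompact_setOf_nonneg_sum_le _).isClosed) Set.inter_subset_right
  obtain ⟨z, hzK, hz⟩ := hK.exists_isMinOn ⟨x₀, hx₀, hS0 x₀ hx₀, le_rfl⟩
    (by fun_prop : Continuous fun x : ι → ℝ => ∑ i, x i).continuousOn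
  refine ⟨z, hzK.1, fun x hx => ?_⟩
  by_cases hx' : ∑ i, x i ≤ ∑ i, x₀ i
  · exact hz ⟨hx, hS0 x hx, hx'⟩
  · exact (hz ⟨hx₀, hS0 x₀ hx₀, le_rfl⟩).trans (not_le.mp hx').le

lemma eventually_smul_le_of_tendsto {α : Type*} {l : Filter α} {f : α → ι → ℝ} {u : ι → ℝ}
    (hf : Tendsto f l (𝓝 u)) (hf0 : ∀ a, 0 ≤ f a) {t : ℝ} (ht0 : 0 ≤ t) (ht1 : t < 1) :
    ∀ᶠ a in l, t • u ≤ f a := by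
  simp only [Pi.le_def, eventually_all]
  intro i
  rcases le_or_gt (u i) 0 with hui | hui
  · exact Eventually.of_forall fun a =>
      (mul_nonpos_of_nonneg_of_nonpos ht0 hui).trans (hf0 a i)
  · exact ((continuous_apply i).tendsto u |>.comp hf).eventually_const_le
      (by simpa using mul_lt_of_lt_one_left hui ht1)

end

section

variable {n : ℕ} {Q : Matrix (Fin n) (Fin n) ℝ} {c : Fin n → ℝ} {ε : ℝ}

lemma dotProduct_mulVec_sub_self_of_mulVec_eq_zero (hQ : Q.IsSymm) {x w : Fin n → ℝ}
    (hw : Q *ᵥ w = 0) : (x - w) ⬝ᵥ (Q *ᵥ (x - w)) = x ⬝ᵥ (Q *ᵥ x) := by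
  have hwQ : w ᵥ* Q = 0 := by rw [← mulVec_transpose, hQ.eq, hw]
  rw [mulVec_sub, hw, sub_zero, sub_dotProduct, dotProduct_mulVec w, hwQ, zero_dotProduct,
    sub_zero]

variable (Q c ε) in
def approxDescentSet : Set (Fin n → ℝ) :=
  {z | 0 ≤ z ∧ c ⬝ᵥ z = -1 ∧ z ⬝ᵥ (Q *ᵥ z) ≤ ε}

lemma isClosed_approxDescentSet : IsClosed (approxDescentSet Q c ε) :=
  (isClosed_le continuous_const continuous_id).inter <|
    (isClosed_eq (continuous_const.dotProduct continuous_id) continuous_const).inter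
      (isClosed_le (continuous_id.dotProduct (continuous_const.matrix_mulVec continuous_id))
        continuous_const)

lemma approxDescentSet_nonempty (hQ : Q.PosSemidef)
    (hunb : ∀ M : ℝ, ∃ x : Fin n → ℝ, (∀ i, 0 ≤ x i) ∧ x ⬝ᵥ (Q *ᵥ x) + c ⬝ᵥ x < M)
    (hε : 0 < ε) : (approxDescentSet Q c ε).Nonempty := by
  obtain ⟨x, hx0, hx⟩ := hunb (-ε⁻¹)
  have hq : 0 ≤ x ⬝ᵥ (Q *ᵥ x) := by simpa using hQ.dotProduct_mulVec_nonneg x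
  set a := -(c ⬝ᵥ x) with ha_def
  have ha : ε⁻¹ < a := by linarith
  have ha0 : 0 < a := (inv_pos.mpr hε).trans ha
  refine ⟨a⁻¹ • x, fun i => mul_nonneg (inv_nonneg.mpr ha0.le) (hx0 i), ?_, ?_⟩
  · rw [dotProduct_smul, smul_eq_mul, ← neg_neg (c ⬝ᵥ x), mul_neg, inv_mul_cancel₀ ha0.ne']
  · rw [mulVec_smul, dotProduct_smul, smul_dotProduct, smul_eq_mul, smul_eq_mul, ← mul_assoc]
    calc a⁻¹ * a⁻¹ * (x ⬝ᵥ (Q *ᵥ x)) ≤ a⁻¹ * a⁻¹ * a := by gcongr; linarith [inv_pos.mpr hε]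
      _ = a⁻¹ := by field_simp
      _ ≤ ε := by rw [inv_le_comm₀ ha0 hε]; exact ha.le

lemma sub_mem_approxDescentSet (hQ : Q.IsSymm) {z w : Fin n → ℝ}
    (hz : z ∈ approxDescentSet Q c ε) (hwz : w ≤ z) (hQw : Q *ᵥ w = 0) (hcw : c ⬝ᵥ w = 0) :
    z - w ∈ approxDescentSet Q c ε :=
  ⟨sub_nonneg.mpr hwz, by rw [dotProduct_sub, hz.2.1, hcw, sub_zero],
    by rw [dotProduct_mulVec_sub_self_of_mulVec_eq_zero hQ hQw]; exact hz.2.2⟩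

lemma inv_one_add_sum_smul_of_mem_approxDescentSet (hQ : Q.PosSemidef) {z : Fin n → ℝ}
    (hz : z ∈ approxDescentSet Q c ε) :
    let v := (1 + ∑ i, z i)⁻¹ • z
    v ≤ z ∧ (0 ≤ v ∧ ∑ i, v i ≤ 1) ∧ c ⬝ᵥ v = ∑ i, v i - 1 ∧ v ⬝ᵥ (Q *ᵥ v) ≤ ε := by
  intro v
  obtain ⟨hz0, hcz, hqz⟩ := hz
  have hs : 0 ≤ ∑ i, z i := Finset.sum_nonneg fun i _ => hz0 i
  have hr0 : 0 < (1 + ∑ i, z i)⁻¹ := by positivity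
  have hr1 : (1 + ∑ i, z i)⁻¹ ≤ 1 := inv_le_one_of_one_le₀ (by linarith)
  have hsv : ∑ i, v i = (1 + ∑ i, z i)⁻¹ * ∑ i, z i := by simp [v, Finset.mul_sum]
  have hq : 0 ≤ z ⬝ᵥ (Q *ᵥ z) := by simpa using hQ.dotProduct_mulVec_nonneg z
  refine ⟨fun i => ?_, ⟨fun i => ?_, ?_⟩, ?_, ?_⟩
  · exact mul_le_of_le_one_left (hz0 i) hr1
  · exact mul_nonneg hr0.le (hz0 i)
  · rw [hsv, inv_mul_le_one₀ (by positivity)]; linarith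
  · have h1 : (1 + ∑ i, z i)⁻¹ * (1 + ∑ i, z i) = 1 := inv_mul_cancel₀ (by positivity)
    rw [hsv, dotProduct_smul, hcz, smul_eq_mul]
    linear_combination (-1 : ℝ) * h1
  · simp only [v, mulVec_smul, dotProduct_smul, smul_dotProduct, smul_eq_mul, ← mul_assoc]
    calc _ ≤ 1 * 1 * (z ⬝ᵥ (Q *ᵥ z)) := by gcongr
      _ ≤ ε := by rw [one_mul, one_mul]; exact hqz

theorem exists_descent_ray_of_approxDescentSet_nonempty (hQ : Q.PosSemidef)
    (hne : ∀ ε > 0, (approxDescentSet Q c ε).Nonempty) :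
    ∃ d : Fin n → ℝ, 0 ≤ d ∧ Q *ᵥ d = 0 ∧ c ⬝ᵥ d < 0 := by
  have hmin (k : ℕ) : ∃ z ∈ approxDescentSet Q c (1 / (k + 1)),
      IsMinOn (fun x => ∑ i, x i) (approxDescentSet Q c (1 / (k + 1))) z :=
    exists_isMinOn_sum_of_isClosed isClosed_approxDescentSet (hne _ (by positivity))
      fun _ hx => hx.1
  choose z hzS hzmin using hmin
  have hv (k : ℕ) := inv_one_add_sum_smul_of_mem_approxDescentSet hQ (hzS k)
  obtain ⟨u, ⟨hu0, hu1⟩, φ, hφ, hvu⟩ :=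
    (isCompact_setOf_nonneg_sum_le 1).tendsto_subseq fun k => (hv k).2.1
  have hcu : c ⬝ᵥ u = ∑ i, u i - 1 :=
    (isClosed_eq (continuous_const.dotProduct continuous_id)
      ((continuous_finsetSum _ fun i _ => continuous_apply i).sub continuous_const)).mem_of_tendsto
      hvu (Eventually.of_forall fun k => (hv (φ k)).2.2.1)
  have hQu : Q *ᵥ u = 0 := by
    have hle : u ⬝ᵥ (Q *ᵥ u) ≤ 0 :=
      le_of_tendsto_of_tendsto'
        ((continuous_id.dotProduct (continuous_const.matrix_mulVec continuous_id)).tendsto u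
          |>.comp hvu)
        (tendsto_one_div_add_atTop_nhds_zero_nat.comp hφ.tendsto_atTop)
        fun k => (hv (φ k)).2.2.2
    have hq : 0 ≤ u ⬝ᵥ (Q *ᵥ u) := by simpa using hQ.dotProduct_mulVec_nonneg u
    simpa using (hQ.dotProduct_mulVec_zero_iff u).mp (by simpa using le_antisymm hle hq)
  refine ⟨u, hu0, hQu, lt_of_not_ge fun hcu0 => ?_⟩
  have hsu : ∑ i, u i = 1 := by linarith
  obtain ⟨k, hk⟩ := (eventually_smul_le_of_tendsto hvu (fun k => (hv (φ k)).2.1.1)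
    (t := 2⁻¹) (by norm_num) (by norm_num)).exists
  have hmem := sub_mem_approxDescentSet (isHermitian_iff_isSymm.mp hQ.isHermitian) (hzS (φ k))
    (hk.trans (hv (φ k)).1) (by rw [mulVec_smul, hQu, smul_zero])
    (by rw [dotProduct_smul, smul_eq_mul]; linarith)
  have hsum : ∑ i, z (φ k) i ≤ ∑ i, (z (φ k) - (2⁻¹ : ℝ) • u) i := hzmin (φ k) hmem
  simp only [Pi.sub_apply, Pi.smul_apply, smul_eq_mul, Finset.sum_sub_distrib,
    ← Finset.mul_sum, hsu] at hsum
  linarith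

end

/-- If a convex quadratic is unbounded below over the non-negative orthant, there is
a non-negative recession direction in the kernel of `Q` with negative linear cost. -/
theorem stmt_2 {n : ℕ} (Q : Matrix (Fin n) (Fin n) ℝ) (hQ : Q.PosSemidef)
    (c : Fin n → ℝ)
    (hunb : ∀ M : ℝ, ∃ x : Fin n → ℝ, (∀ i, 0 ≤ x i) ∧ x ⬝ᵥ (Q *ᵥ x) + c ⬝ᵥ x < M) :
    ∃ d : Fin n → ℝ, (∀ i, 0 ≤ d i) ∧ Q *ᵥ d = 0 ∧ c ⬝ᵥ d < 0 :=
  exists_descent_ray_of_approxDescentSet_nonempty hQ fun _ hε =>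
    approxDescentSet_nonempty hQ hunb hε
end

section
/- Strong duality in recoverable form: with Q ≻ 0 and λ* ≥ 0 a minimizer of the dual objective λ ↦ λᵀQ̃λ + c̃ᵀλ + d̃ over {λ ≥ 0}, the point x* = −(1/2)Q⁻¹(c + Aᵀλ*) is a global minimizer of x ↦ xᵀQx + cᵀx + d over {x : Ax ≤ b}, and the optimal values satisfy (x*)ᵀQx* + cᵀx* + d = −((λ*)ᵀQ̃λ* + c̃ᵀλ* + d̃). -/
/-!
Completing the square in `x` gives, for the primal objective `f` and all `x`, `λ`,
`f x + λ ⬝ᵥ (A x - b) = -D λ + (x - x(λ)) ⬝ᵥ Q (x - x(λ))` with `x(λ) = -½ Q⁻¹ (c + Aᵀ λ)`,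
so for `Q ≻ 0`, `λ ≥ 0` and feasible `x` we get weak duality `-D λ ≤ f x`.
The gradient of the dual objective `D` at `λ` is `b - A x(λ)`; testing the minimality of `λ*`
on the nonnegative orthant along coordinate directions therefore gives feasibility of
`x* = x(λ*)` and complementary slackness `λ*ᵢ (b - A x*)ᵢ = 0`. The latter turns the identity
at `x = x*` into `f x* = -D λ*`, and weak duality makes `x*` optimal.
-/

open Matrix Filter Topology

namespace Matrix.IsSymm

variable {α ι κ : Type*} [CommSemiring α] [Fintype ι] {M : Matrix ι ι α}

theorem dotProduct_mulVec_comm (hM : M.IsSymm) (u v : ι → α) :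
    u ⬝ᵥ (M *ᵥ v) = v ⬝ᵥ (M *ᵥ u) := by
  rw [dotProduct_mulVec, ← mulVec_transpose, hM.eq, dotProduct_comm]

theorem mul_mul_transpose (hM : M.IsSymm) (A : Matrix κ ι α) : (A * M * Aᵀ).IsSymm := by
  simp [IsSymm, transpose_mul, hM.eq, Matrix.mul_assoc]

end Matrix.IsSymm

section Quadratic

variable {ι : Type*} [Fintype ι]

def quadObjective (M : Matrix ι ι ℝ) (p : ι → ℝ) (r : ℝ) (x : ι → ℝ) : ℝ :=
  x ⬝ᵥ (M *ᵥ x) + p ⬝ᵥ x + r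

theorem quadObjective_add {M : Matrix ι ι ℝ} (hM : M.IsSymm) (p : ι → ℝ) (r : ℝ)
    (x v : ι → ℝ) :
    quadObjective M p r (x + v) =
      quadObjective M p r x + (2 • (M *ᵥ x) + p) ⬝ᵥ v + v ⬝ᵥ (M *ᵥ v) := by
  simp only [quadObjective, mulVec_add, dotProduct_add, add_dotProduct, smul_dotProduct,
    dotProduct_comm (M *ᵥ x) v, hM.dotProduct_mulVec_comm v x, dotProduct_comm p v]
  ring

theorem nonneg_of_forall_mul_add_mul_sq_nonneg {a q l : ℝ} (hl : 0 < l)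
    (h : ∀ t, 0 < t → t ≤ l → 0 ≤ a * t + q * t ^ 2) : 0 ≤ a := by
  have hlim : Tendsto (fun t => a + q * t) (𝓝[>] 0) (𝓝 a) := by
    have hcont : Continuous fun t : ℝ => a + q * t := by fun_prop
    simpa using (hcont.tendsto 0).mono_left nhdsWithin_le_nhds
  refine ge_of_tendsto hlim ?_
  filter_upwards [Ioo_mem_nhdsGT hl] with t ht
  refine nonneg_of_mul_nonneg_right ?_ ht.1
  linarith [h t ht.1 ht.2.le]

variable [DecidableEq ι]

theorem quadObjective_add_single {M : Matrix ι ι ℝ} (hM : M.IsSymm) (p : ι → ℝ) (r : ℝ)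
    (x : ι → ℝ) (i : ι) (t : ℝ) :
    quadObjective M p r (x + Pi.single i t) =
      quadObjective M p r x + (2 • (M *ᵥ x) + p) i * t + M i i * t ^ 2 := by
  rw [quadObjective_add hM, dotProduct_single, single_dotProduct]
  simp only [mulVec_single, Pi.smul_apply, col_apply, MulOpposite.smul_eq_mul_unop,
    MulOpposite.unop_op]
  ring

theorem IsMinOn.quadObjective_kkt {M : Matrix ι ι ℝ} (hM : M.IsSymm) {p : ι → ℝ} {r : ℝ}
    {x : ι → ℝ} (hmin : IsMinOn (quadObjective M p r) (Set.Ici 0) x) (hx : ∀ j, 0 ≤ x j) (i : ι) :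
    0 ≤ (2 • (M *ᵥ x) + p) i ∧ x i * (2 • (M *ᵥ x) + p) i = 0 := by
  set g := (2 • (M *ᵥ x) + p) i
  have hstep : ∀ t, -x i ≤ t → 0 ≤ g * t + M i i * t ^ 2 := by
    intro t ht
    have hmem : x + Pi.single i t ∈ Set.Ici 0 := by
      intro j
      rcases eq_or_ne j i with rfl | hj
      · simp only [Pi.zero_apply, Pi.add_apply, Pi.single_eq_same]
        linarith
      · simpa [hj] using hx j
    have := isMinOn_iff.mp hmin _ hmem
    rw [quadObjective_add_single hM] at this
    linarith
  have hg : 0 ≤ g :=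
    nonneg_of_forall_mul_add_mul_sq_nonneg one_pos fun t ht _ => hstep t (by linarith [hx i])
  refine ⟨hg, ?_⟩
  rcases (hx i).eq_or_lt with h0 | hpos
  · rw [← h0, zero_mul]
  · have hg' : 0 ≤ -g := nonneg_of_forall_mul_add_mul_sq_nonneg hpos fun t _ htl => by
      have := hstep (-t) (neg_le_neg htl)
      rw [neg_sq] at this
      linarith
    rw [le_antisymm (by linarith) hg, mul_zero]

end Quadratic

noncomputable section Duality

variable {n m : Type*} [Fintype n] [Fintype m] [DecidableEq n]
  (Q : Matrix n n ℝ) (A : Matrix m n ℝ) (c : n → ℝ) (b : m → ℝ) (d : ℝ)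

def dualObjective : (m → ℝ) → ℝ :=
  quadObjective ((1/4 : ℝ) • (A * Q⁻¹ * Aᵀ)) ((1/2 : ℝ) • (A *ᵥ (Q⁻¹ *ᵥ c)) + b)
    ((1/4 : ℝ) * (c ⬝ᵥ (Q⁻¹ *ᵥ c)) - d)

def lagrangianMinimizer (lam : m → ℝ) : n → ℝ :=
  (-(1/2 : ℝ)) • (Q⁻¹ *ᵥ (c + Aᵀ *ᵥ lam))

theorem dualObjective_gradient (lam : m → ℝ) :
    2 • (((1/4 : ℝ) • (A * Q⁻¹ * Aᵀ)) *ᵥ lam) + ((1/2 : ℝ) • (A *ᵥ (Q⁻¹ *ᵥ c)) + b) =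
      b - A *ᵥ lagrangianMinimizer Q A c lam := by
  ext i
  rw [smul_mulVec, ← mulVec_mulVec, ← mulVec_mulVec]
  simp only [lagrangianMinimizer, mulVec_smul, mulVec_add, Pi.add_apply, Pi.sub_apply,
    Pi.smul_apply, smul_eq_mul, two_nsmul]
  ring

variable {Q}

theorem mulVec_lagrangianMinimizer (hdet : IsUnit Q.det) (lam : m → ℝ) :
    Q *ᵥ lagrangianMinimizer Q A c lam = (-(1/2 : ℝ)) • (c + Aᵀ *ᵥ lam) := by
  rw [lagrangianMinimizer, mulVec_smul, mulVec_mulVec, mul_nonsing_inv Q hdet, one_mulVec]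

theorem lagrangian_lagrangianMinimizer (hQ : Q.IsSymm) (hdet : IsUnit Q.det) (lam : m → ℝ) :
    quadObjective Q c d (lagrangianMinimizer Q A c lam) +
        lam ⬝ᵥ (A *ᵥ lagrangianMinimizer Q A c lam - b) = -dualObjective Q A c b d lam := by
  have hQx := mulVec_lagrangianMinimizer A c hdet lam
  set x := lagrangianMinimizer Q A c lam with hx
  set w := c + Aᵀ *ᵥ lam with hw
  have hlin : c ⬝ᵥ x + lam ⬝ᵥ (A *ᵥ x) = w ⬝ᵥ x := by
    rw [hw, add_dotProduct, mulVec_transpose, ← dotProduct_mulVec]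
  have hxw : w ⬝ᵥ x = -(1/2) * (w ⬝ᵥ (Q⁻¹ *ᵥ w)) := by
    rw [hx, lagrangianMinimizer, dotProduct_smul, smul_eq_mul]
  have hww : w ⬝ᵥ (Q⁻¹ *ᵥ w) = c ⬝ᵥ (Q⁻¹ *ᵥ c) + 2 * (lam ⬝ᵥ (A *ᵥ (Q⁻¹ *ᵥ c))) +
      lam ⬝ᵥ (A *ᵥ (Q⁻¹ *ᵥ (Aᵀ *ᵥ lam))) := by
    rw [hw, mulVec_add, dotProduct_add, add_dotProduct, add_dotProduct,
      hQ.inv.dotProduct_mulVec_comm c (Aᵀ *ᵥ lam), mulVec_transpose, ← dotProduct_mulVec,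
      ← dotProduct_mulVec]
    ring
  have hxQx : x ⬝ᵥ (Q *ᵥ x) = -(1/2) * (w ⬝ᵥ x) := by
    rw [hQx, dotProduct_smul, dotProduct_comm, smul_eq_mul]
  simp only [dualObjective, quadObjective, dotProduct_sub, smul_dotProduct, add_dotProduct,
    smul_mulVec, ← mulVec_mulVec, dotProduct_smul, smul_eq_mul]
  rw [dotProduct_comm _ lam, dotProduct_comm b lam]
  linarith

theorem lagrangian_eq (hQ : Q.IsSymm) (hdet : IsUnit Q.det) (x : n → ℝ) (lam : m → ℝ) :
    quadObjective Q c d x + lam ⬝ᵥ (A *ᵥ x - b) =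
      -dualObjective Q A c b d lam +
        (x - lagrangianMinimizer Q A c lam) ⬝ᵥ (Q *ᵥ (x - lagrangianMinimizer Q A c lam)) := by
  set x₀ := lagrangianMinimizer Q A c lam
  have hgrad : 2 • (Q *ᵥ x₀) + c = -(Aᵀ *ᵥ lam) := by
    rw [mulVec_lagrangianMinimizer A c hdet, two_nsmul, ← add_smul]
    module
  have hsplit := quadObjective_add hQ c d x₀ (x - x₀)
  rw [add_sub_cancel, hgrad] at hsplit
  rw [← lagrangian_lagrangianMinimizer A c b d hQ hdet lam, hsplit]
  rw [neg_dotProduct, mulVec_transpose, ← dotProduct_mulVec]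
  simp only [mulVec_sub, dotProduct_sub]
  ring

theorem neg_dualObjective_le (hQ : Q.PosDef) {x : n → ℝ} (hx : ∀ i, (A *ᵥ x) i ≤ b i)
    {lam : m → ℝ} (hlam : ∀ i, 0 ≤ lam i) :
    -dualObjective Q A c b d lam ≤ quadObjective Q c d x := by
  have hsymm : Q.IsSymm := isHermitian_iff_isSymm.mp hQ.isHermitian
  have hdet : IsUnit Q.det := (isUnit_iff_isUnit_det Q).mp hQ.isUnit
  have hpenalty : lam ⬝ᵥ (A *ᵥ x - b) ≤ 0 :=
    Finset.sum_nonpos fun i _ => mul_nonpos_of_nonneg_of_nonpos (hlam i) (sub_nonpos.mpr (hx i))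
  have hsq := hQ.posSemidef.dotProduct_mulVec_nonneg (x - lagrangianMinimizer Q A c lam)
  rw [star_trivial] at hsq
  linarith [lagrangian_eq A c b d hsymm hdet x lam]

end Duality

/-- Strong duality: the primal solution recovered from a dual optimal solution is a
global primal minimizer and the optimal values coincide. -/
theorem stmt_12 {n m : ℕ} (Q : Matrix (Fin n) (Fin n) ℝ) (hQ : Q.PosDef)
    (A : Matrix (Fin m) (Fin n) ℝ) (c : Fin n → ℝ) (b : Fin m → ℝ) (d : ℝ)
    (Qt : Matrix (Fin m) (Fin m) ℝ) (hQt : Qt = (1/4 : ℝ) • (A * Q⁻¹ * Aᵀ))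
    (ct : Fin m → ℝ) (hct : ct = (1/2 : ℝ) • (A *ᵥ (Q⁻¹ *ᵥ c)) + b)
    (dt : ℝ) (hdt : dt = (1/4 : ℝ) * (c ⬝ᵥ (Q⁻¹ *ᵥ c)) - d)
    (lams : Fin m → ℝ) (hlams : ∀ i, 0 ≤ lams i)
    (hmin : ∀ lam : Fin m → ℝ, (∀ i, 0 ≤ lam i) →
      lams ⬝ᵥ (Qt *ᵥ lams) + ct ⬝ᵥ lams + dt ≤ lam ⬝ᵥ (Qt *ᵥ lam) + ct ⬝ᵥ lam + dt)
    (xs : Fin n → ℝ) (hxs : xs = (-(1/2 : ℝ)) • (Q⁻¹ *ᵥ (c + Aᵀ *ᵥ lams))) :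
    (∀ i, (A *ᵥ xs) i ≤ b i) ∧
      (∀ x : Fin n → ℝ, (∀ i, (A *ᵥ x) i ≤ b i) →
        xs ⬝ᵥ (Q *ᵥ xs) + c ⬝ᵥ xs + d ≤ x ⬝ᵥ (Q *ᵥ x) + c ⬝ᵥ x + d) ∧
      xs ⬝ᵥ (Q *ᵥ xs) + c ⬝ᵥ xs + d = -(lams ⬝ᵥ (Qt *ᵥ lams) + ct ⬝ᵥ lams + dt) := by
  subst hQt hct hdt
  obtain rfl : xs = lagrangianMinimizer Q A c lams := hxs
  have hsymm : Q.IsSymm := isHermitian_iff_isSymm.mp hQ.isHermitian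
  have hdet : IsUnit Q.det := (isUnit_iff_isUnit_det Q).mp hQ.isUnit
  have hdualMin : IsMinOn (dualObjective Q A c b d) (Set.Ici 0) lams :=
    isMinOn_iff.mpr fun lam hlam => hmin lam hlam
  have hkkt := hdualMin.quadObjective_kkt ((hsymm.inv.mul_mul_transpose A).smul _) hlams
  simp only [dualObjective_gradient, Pi.sub_apply, sub_nonneg] at hkkt
  have hslack : lams ⬝ᵥ (A *ᵥ lagrangianMinimizer Q A c lams - b) = 0 :=
    Finset.sum_eq_zero fun i _ => by rw [Pi.sub_apply, ← neg_sub, mul_neg, (hkkt i).2, neg_zero]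
  have hvalue : quadObjective Q c d (lagrangianMinimizer Q A c lams) =
      -dualObjective Q A c b d lams := by
    simpa [hslack] using lagrangian_lagrangianMinimizer A c b d hsymm hdet lams
  exact ⟨fun i => (hkkt i).1,
    fun x hx => hvalue.trans_le (neg_dualObjective_le A c b d hQ hx hlams), hvalue⟩
end

section
/- Let Q ≻ 0 and for each fixing r of the first ℓ variables let y(r) = −(1/2)Q_ℓ⁻¹ c(r) be the unconstrained minimizer of the reduced quadratic f_r. Then for r = (r', r_ℓ) there exists a vector z^{ℓ−1} ∈ ℝ^{n−ℓ+1}, depending only on ℓ (not on r'), such that y(r) = [y(r') + α z^{ℓ−1}]_{1,…,n−ℓ} with α = r_ℓ − y(r')_ℓ. Equivalently: the unconstrained continuous minimizers corresponding to all possible values of the next fixed variable lie on a common line whose direction depends only on the depth ℓ. -/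
/-!
Write the parent matrix as `[[A, b], [bᵀ, d]]` with `A` the child matrix. The first `k` rows of the
parent system `M y = w` read `A u + t b = w'` (with `u`, `t` the head and last entry of `y`), while
the child system is `A y' = w' - s b`. Subtracting gives `y' = u + (s - t) (-A⁻¹ b)`, and the
direction `(-A⁻¹ b, 1)` involves only `Q` and the depth.
-/

open Matrix

variable {R : Type*} [Field R] {k : ℕ}

noncomputable def fixLastDirection (M : Matrix (Fin (k + 1)) (Fin (k + 1)) R) : Fin (k + 1) → R :=
  Fin.lastCases 1
    (-((M.submatrix Fin.castSucc Fin.castSucc)⁻¹ *ᵥ fun i => M i.castSucc (Fin.last k)))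

lemma mulVec_castSucc (M : Matrix (Fin (k + 1)) (Fin (k + 1)) R) (y : Fin (k + 1) → R)
    (j : Fin k) :
    (M *ᵥ y) j.castSucc =
      (M.submatrix Fin.castSucc Fin.castSucc *ᵥ fun i => y i.castSucc) j
        + y (Fin.last k) * M j.castSucc (Fin.last k) := by
  simp only [mulVec, dotProduct, Fin.sum_univ_castSucc, submatrix_apply]
  ring

lemma submatrix_castSucc_inv_mulVec {M : Matrix (Fin (k + 1)) (Fin (k + 1)) R}
    (hA : IsUnit (M.submatrix Fin.castSucc Fin.castSucc)) {y w : Fin (k + 1) → R}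
    (hy : M *ᵥ y = w) (s : R) :
    (M.submatrix Fin.castSucc Fin.castSucc)⁻¹ *ᵥ
        (fun j => w j.castSucc - s * M j.castSucc (Fin.last k)) =
      fun j => y j.castSucc + (s - y (Fin.last k)) * fixLastDirection M j.castSucc := by
  set A := M.submatrix Fin.castSucc Fin.castSucc
  set b : Fin k → R := fun i => M i.castSucc (Fin.last k)
  have : Invertible A := hA.invertible
  have hline : (fun j => y j.castSucc + (s - y (Fin.last k)) * fixLastDirection M j.castSucc) =
      (fun j => y j.castSucc) - (s - y (Fin.last k)) • (A⁻¹ *ᵥ b) := by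
    ext j
    simp only [fixLastDirection, Fin.lastCases_castSucc, Pi.neg_apply, mul_neg, Pi.sub_apply,
      Pi.smul_apply, smul_eq_mul, A, b]
    ring
  rw [hline]
  refine inv_mulVec_eq_vec ?_
  rw [mulVec_sub, mulVec_smul, mulVec_mulVec, mul_inv_of_invertible, one_mulVec]
  ext j
  simp only [Pi.sub_apply, Pi.smul_apply, smul_eq_mul, ← hy, mulVec_castSucc, b, A]
  ring

/-- Incremental-minimizer lemma: the unconstrained minimizers of the reduced quadratics
obtained by additionally fixing the next branching variable lie on a common line whose
direction `z` depends only on the depth, not on the previous fixing `r'`. -/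
theorem stmt_15 (l k n : ℕ) (hn : n = l + k + 1)
    (Q : Matrix (Fin n) (Fin n) ℝ) (hQ : Q.PosDef) (c : Fin n → ℝ) :
    ∃ z : Fin (k + 1) → ℝ, ∀ (r' : Fin l → ℝ) (rl : ℝ),
      -- parent: first `l` variables fixed to `r'`, remaining dimension `k+1`
      ∀ (Qp : Matrix (Fin (k + 1)) (Fin (k + 1)) ℝ),
        Qp = Q.submatrix (fun i => (⟨l + i.val, by omega⟩ : Fin n))
                         (fun i => (⟨l + i.val, by omega⟩ : Fin n)) →
      ∀ cp : Fin (k + 1) → ℝ,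
        (∀ j : Fin (k + 1), cp j = c ⟨l + j.val, by omega⟩ +
          2 * ∑ i : Fin l, Q ⟨i.val, by omega⟩ ⟨l + j.val, by omega⟩ * r' i) →
      -- child: additionally the branched variable (last coordinate) fixed to `rl`,
      -- remaining dimension `k`
      ∀ (Qc : Matrix (Fin k) (Fin k) ℝ),
        Qc = Q.submatrix (fun i => (⟨l + i.val, by omega⟩ : Fin n))
                         (fun i => (⟨l + i.val, by omega⟩ : Fin n)) →
      ∀ cc : Fin k → ℝ,
        (∀ j : Fin k, cc j = c ⟨l + j.val, by omega⟩ +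
          2 * (∑ i : Fin l, Q ⟨i.val, by omega⟩ ⟨l + j.val, by omega⟩ * r' i) +
          2 * Q ⟨l + k, by omega⟩ ⟨l + j.val, by omega⟩ * rl) →
      ∀ yp : Fin (k + 1) → ℝ, yp = (-(1/2 : ℝ)) • (Qp⁻¹ *ᵥ cp) →
      ∀ yc : Fin k → ℝ, yc = (-(1/2 : ℝ)) • (Qc⁻¹ *ᵥ cc) →
      ∀ α : ℝ, α = rl - yp (Fin.last k) →
      -- the child's minimizer is the truncation of `yp + α z` to the first `k` components
      ∀ j : Fin k, yc j = yp (Fin.castSucc j) + α * z (Fin.castSucc j) := by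

  set e : Fin (k + 1) → Fin n := fun i => ⟨l + i.val, by omega⟩
  have he : Function.Injective e := fun i j h => Fin.ext (by simpa [e] using h)
  refine ⟨fixLastDirection (Q.submatrix e e), ?_⟩
  rintro r' rl _ rfl cp hcp _ rfl cc hcc yp rfl yc rfl α rfl j
  set M := Q.submatrix e e
  have hchild : Q.submatrix (fun i : Fin k => (⟨l + i.val, by omega⟩ : Fin n))
      (fun i : Fin k => (⟨l + i.val, by omega⟩ : Fin n)) =
      M.submatrix Fin.castSucc Fin.castSucc := rfl
  have hA : IsUnit (M.submatrix Fin.castSucc Fin.castSucc) :=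
    (hQ.submatrix (he.comp (Fin.castSucc_injective k))).isUnit
  have hparent : M *ᵥ (M⁻¹ *ᵥ ((-(1/2 : ℝ)) • cp)) = (-(1/2 : ℝ)) • cp := by
    rw [mulVec_mulVec, mul_nonsing_inv _ ((isUnit_iff_isUnit_det M).mp (hQ.submatrix he).isUnit),
      one_mulVec]
  have hcc' : (-(1/2 : ℝ)) • cc =
      fun j => ((-(1/2 : ℝ)) • cp) j.castSucc - rl * M j.castSucc (Fin.last k) := by
    ext j
    simp only [Pi.smul_apply, smul_eq_mul, hcc, hcp, M, e, submatrix_apply, Fin.val_castSucc,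
      Fin.val_last]
    rw [← hQ.1.apply (⟨l + k, by omega⟩ : Fin n), star_trivial]
    ring
  rw [hchild, ← mulVec_smul, hcc', congrFun (submatrix_castSucc_inv_mulVec hA hparent rl) j,
    ← mulVec_smul]
end

section
/- Let {x^k} be the sequence produced by an algorithm that at each step (i) fixes to zero the estimated active variables A^k = {i : x^k_i ≤ ε g_i(x^k)}, obtaining x̃^k (with 0 < ε < 1/(2λ_max(Q))), and (ii) moves to x^{k+1} = [x̃^k + α^k d^k]⁺, where d^k is zero on A^k, d^k restricted to N^k satisfies (d^k)ᵀg(x̃^k)_{N^k} ≤ −σ₁‖g(x̃^k)_{N^k}‖², and the Armijo condition q(x^{k+1}) ≤ q(x̃^k) + γα^k g(x̃^k)ᵀd^k holds with γ ∈ (0, 1/2). Then q(x^{k+1}) ≤ q(x̃^k) ≤ q(x^k) − (1/(2ε))‖x̃^k − x^k‖², and moreover q(x^{k+1}) ≤ q(x^k) − (1/(2ε))‖x̃^k − x^k‖² − γα^k σ₁‖g(x̃^k)_{N^k}‖². -/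
open Matrix Finset

lemma quad_le_eig {n : ℕ} {Q : Matrix (Fin n) (Fin n) ℝ} (hQ : Q.IsHermitian)
    {L : ℝ} (hle : ∀ i, hQ.eigenvalues i ≤ L) (v : Fin n → ℝ) :
    v ⬝ᵥ (Q *ᵥ v) ≤ L * ∑ i, v i ^ 2 := by
  classical
  set U : Matrix (Fin n) (Fin n) ℝ := (hQ.eigenvectorUnitary : Matrix (Fin n) (Fin n) ℝ) with hU
  set w : Fin n → ℝ := (star U) *ᵥ v with hw
  have hvU : v ᵥ* U = w := by
    funext j
    simp [hw, vecMul, mulVec, dotProduct, star, conjTranspose, mul_comm]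
  have key : v ⬝ᵥ (Q *ᵥ v) = ∑ i, hQ.eigenvalues i * w i ^ 2 := by
    conv_lhs => rw [hQ.spectral_theorem, Unitary.conjStarAlgAut_apply]
    rw [← hU, ← mulVec_mulVec, ← mulVec_mulVec, dotProduct_mulVec, hvU, ← hw]
    simp [dotProduct, mulVec_diagonal]
    apply Finset.sum_congr rfl
    intro i _
    ring
  have hnorm : ∑ i, w i ^ 2 = ∑ i, v i ^ 2 := by
    have h1 : w ⬝ᵥ w = v ⬝ᵥ v := by
      nth_rewrite 1 [← hvU]
      rw [show (v ᵥ* U) ⬝ᵥ w = v ⬝ᵥ (U *ᵥ w) from (dotProduct_mulVec v U w).symm]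
      rw [hw, mulVec_mulVec, Matrix.mem_unitaryGroup_iff.mp (hQ.eigenvectorUnitary).2, one_mulVec]
    simpa [dotProduct, sq] using h1
  rw [key, ← hnorm, Finset.mul_sum]
  exact Finset.sum_le_sum fun i _ => mul_le_mul_of_nonneg_right (hle i) (sq_nonneg _)

/-- One iteration of FAST-QPA: the active-set fixing step plus the projected Armijo
step yield a quantified decrease of the objective. -/
theorem stmt_18 {n : ℕ} (hn : 0 < n) (Q : Matrix (Fin n) (Fin n) ℝ) (hQ : Q.PosSemidef)
    (c : Fin n → ℝ)
    (q : (Fin n → ℝ) → ℝ) (hq : ∀ x, q x = x ⬝ᵥ (Q *ᵥ x) + c ⬝ᵥ x)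
    (g : (Fin n → ℝ) → (Fin n → ℝ)) (hg : ∀ x, g x = (2 : ℝ) • (Q *ᵥ x) + c)
    (ε : ℝ) (hε : 0 < ε) (hεlt : ε < 1 / (2 * ⨆ i, hQ.1.eigenvalues i))
    (γ : ℝ) (hγ : 0 < γ ∧ γ < 1/2)
    (σ₁ : ℝ) (hσ₁ : 0 < σ₁)
    (x : Fin n → ℝ) (hx : ∀ i, 0 ≤ x i)
    -- active-set fixing step
    (xt : Fin n → ℝ) (hxt : ∀ i, xt i = if x i ≤ ε * g x i then 0 else x i)
    -- the search direction vanishes on the estimated active set and is gradient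
    -- related on the non-active set
    (d : Fin n → ℝ) (hdA : ∀ i, x i ≤ ε * g x i → d i = 0)
    (hdN : ∑ i ∈ univ.filter (fun i => ¬ x i ≤ ε * g x i), d i * g xt i ≤
      -σ₁ * ∑ i ∈ univ.filter (fun i => ¬ x i ≤ ε * g x i), (g xt i) ^ 2)
    -- projected Armijo step
    (αk : ℝ) (hαk : 0 < αk)
    (x' : Fin n → ℝ) (hx' : ∀ i, x' i = max 0 (xt i + αk * d i))
    (hArmijo : q x' ≤ q xt + γ * αk * (g xt ⬝ᵥ d)) :
    q x' ≤ q x - (1 / (2 * ε)) * (∑ i, (xt i - x i) ^ 2) -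
        γ * αk * σ₁ * ∑ i ∈ univ.filter (fun i => ¬ x i ≤ ε * g x i), (g xt i) ^ 2 ∧
      q x' ≤ q xt ∧
      q xt ≤ q x - (1 / (2 * ε)) * ∑ i, (xt i - x i) ^ 2 := by
  classical
  set L : ℝ := ⨆ i, hQ.1.eigenvalues i with hL
  -- positivity of the supremum of eigenvalues
  have hLpos : 0 < L := by
    by_contra h
    push_neg at h
    have h2 : 1 / (2 * L) ≤ 0 := by
      rcases lt_or_eq_of_le h with h' | h'
      · exact le_of_lt (div_neg_of_pos_of_neg one_pos (by linarith))
      · rw [h', mul_zero, div_zero]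
    linarith [hε.trans hεlt]
  have hle : ∀ i, hQ.1.eigenvalues i ≤ L :=
    fun i => le_ciSup (Set.finite_range _).bddAbove i
  have hLle : L ≤ 1 / (2 * ε) := by
    have h1 : ε * (2 * L) < 1 := (lt_div_iff₀ (by linarith)).mp hεlt
    have h2 : L * (2 * ε) < 1 := by nlinarith
    exact le_of_lt ((lt_div_iff₀ (by linarith)).mpr h2)
  set v : Fin n → ℝ := fun i => xt i - x i with hv
  have hSnn : (0:ℝ) ≤ ∑ i, v i ^ 2 := Finset.sum_nonneg fun i _ => sq_nonneg _
  -- symmetry of Q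
  have hQt : Qᵀ = Q := by
    have := hQ.1
    simpa [Matrix.IsHermitian, Matrix.conjTranspose_eq_transpose_of_trivial] using this
  have hsymm : ∀ (a b : Fin n → ℝ), a ⬝ᵥ (Q *ᵥ b) = b ⬝ᵥ (Q *ᵥ a) := by
    intro a b
    rw [dotProduct_mulVec, ← vecMul_transpose, hQt, dotProduct_comm]
  -- expansion of q at xt
  have hxtv : xt = fun i => x i + v i := by funext i; simp [hv]
  have hexp : q xt = q x + v ⬝ᵥ (Q *ᵥ v) + (g x) ⬝ᵥ v := by
    rw [hq, hq, hg, hxtv]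
    have h1 : (fun i => x i + v i) = x + v := rfl
    rw [h1, Matrix.mulVec_add, dotProduct_add, add_dotProduct, add_dotProduct,
      dotProduct_add, add_dotProduct, smul_dotProduct, smul_eq_mul]
    have h3 : (Q *ᵥ x) ⬝ᵥ v = x ⬝ᵥ (Q *ᵥ v) := by
      rw [dotProduct_comm]; exact hsymm v x
    rw [hsymm v x, h3]
    ring
  -- gradient term bound
  have hgrad : (g x) ⬝ᵥ v ≤ -(1/ε) * ∑ i, v i ^ 2 := by
    rw [dotProduct, Finset.mul_sum]
    apply Finset.sum_le_sum
    intro i _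
    by_cases hi : x i ≤ ε * g x i
    · have hvi : v i = -x i := by simp [hv, hxt i, hi]
      rw [hvi]
      have hmul : x i * x i ≤ (ε * g x i) * x i := mul_le_mul_of_nonneg_right hi (hx i)
      have hεinv : (1/ε) * ε = 1 := by field_simp
      nlinarith [sq_nonneg (x i), hε]
    · have hvi : v i = 0 := by simp [hv, hxt i, hi]
      simp [hvi]
  have hquad : v ⬝ᵥ (Q *ᵥ v) ≤ L * ∑ i, v i ^ 2 := quad_le_eig hQ.1 hle v
  -- third conjunct
  have hthird : q xt ≤ q x - (1 / (2 * ε)) * ∑ i, v i ^ 2 := by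
    rw [hexp]
    have : (1 : ℝ)/(2*ε) = 1/ε - 1/(2*ε) := by field_simp; ring
    nlinarith [mul_le_mul_of_nonneg_right hLle hSnn]
  -- direction term
  set S : ℝ := ∑ i ∈ univ.filter (fun i => ¬ x i ≤ ε * g x i), (g xt i) ^ 2 with hS
  have hSnn2 : (0:ℝ) ≤ S := Finset.sum_nonneg fun i _ => sq_nonneg _
  have hgd : g xt ⬝ᵥ d ≤ -σ₁ * S := by
    have hsplit : g xt ⬝ᵥ d =
        ∑ i ∈ univ.filter (fun i => ¬ x i ≤ ε * g x i), d i * g xt i := by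
      rw [dotProduct, ← Finset.sum_filter_add_sum_filter_not univ (fun i => x i ≤ ε * g x i)]
      have h0 : ∑ i ∈ univ.filter (fun i => x i ≤ ε * g x i), g xt i * d i = 0 := by
        apply Finset.sum_eq_zero
        intro i hi
        rw [hdA i (Finset.mem_filter.mp hi).2, mul_zero]
      rw [h0, zero_add]
      exact Finset.sum_congr rfl fun i _ => mul_comm _ _
    rw [hsplit]
    exact hdN
  have hsecond : q x' ≤ q xt - γ * αk * σ₁ * S := by
    have h1 : γ * αk * (g xt ⬝ᵥ d) ≤ γ * αk * (-σ₁ * S) :=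
      mul_le_mul_of_nonneg_left hgd (le_of_lt (mul_pos hγ.1 hαk))
    calc q x' ≤ q xt + γ * αk * (g xt ⬝ᵥ d) := hArmijo
      _ ≤ q xt + γ * αk * (-σ₁ * S) := by linarith
      _ = q xt - γ * αk * σ₁ * S := by ring
  refine ⟨?_, ?_, hthird⟩
  · calc q x' ≤ q xt - γ * αk * σ₁ * S := hsecond
      _ ≤ q x - (1 / (2 * ε)) * (∑ i, v i ^ 2) - γ * αk * σ₁ * S := by linarith
  · have : 0 ≤ γ * αk * σ₁ * S :=
      mul_nonneg (le_of_lt (mul_pos (mul_pos hγ.1 hαk) hσ₁)) hSnn2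
    linarith
end

section
/- Convergence of projected gradient residual: let Q ⪰ 0, q(x) = xᵀQx + cᵀx bounded below on {x ≥ 0}, and let {x^k} be a sequence of non-negative points such that q(x^{k+1}) ≤ q(x^k) − (1/(2ε))‖x̃^k − x^k‖² − σ₁‖g(x̃^k)_{N^k}‖² for all k, where x̃^k agrees with x^k on N^k and is zero on its complement A^k, and g_i(x^k) ≥ 0 for all i ∈ A^k. Then ‖max{0, −g(x^k)}‖ → 0 as k → ∞. -/
open Matrix Finset Filter

/-! The sufficient-decrease inequality telescopes against the lower bound of `q`, so the
decreases `‖x̃ᵏ - xᵏ‖²` and `‖g(x̃ᵏ)_{Nᵏ}‖²` are summable and tend to `0`. On `Aᵏ` the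
residual `max{0, -g(xᵏ)}` vanishes, and on `Nᵏ` it is dominated by `|g(xᵏ)|`, which is within
`‖2Q(x̃ᵏ - xᵏ)‖` of `g(x̃ᵏ)`; hence the residual tends to `0` as well. -/

theorem tendsto_zero_of_le_sub_succ {u r : ℕ → ℝ} {B : ℝ} (hr : ∀ k, 0 ≤ r k)
    (hdec : ∀ k, r k ≤ u k - u (k + 1)) (hB : ∀ k, B ≤ u k) :
    Tendsto r atTop (nhds 0) := by
  refine (summable_of_sum_range_le (c := u 0 - B) hr fun N => ?_).tendsto_atTop_zero
  calc ∑ k ∈ range N, r k ≤ ∑ k ∈ range N, (u k - u (k + 1)) := sum_le_sum fun k _ => hdec k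
    _ = u 0 - u N := sum_range_sub' u N
    _ ≤ u 0 - B := by linarith [hB N]

theorem tendsto_zero_of_mul_le {u r : ℕ → ℝ} {a : ℝ} (ha : 0 < a) (hu : ∀ k, 0 ≤ u k)
    (hle : ∀ k, a * u k ≤ r k) (hr : Tendsto r atTop (nhds 0)) :
    Tendsto u atTop (nhds 0) := by
  have hau : Tendsto (fun k => a * u k) atTop (nhds 0) :=
    squeeze_zero (fun k => mul_nonneg ha.le (hu k)) hle hr
  simpa [ha.ne'] using hau.const_mul a⁻¹

theorem sum_sq_mulVec_le {m n : Type*} [Fintype m] [Fintype n] (M : Matrix m n ℝ)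
    (v : n → ℝ) :
    ∑ i, (M *ᵥ v) i ^ 2 ≤ (∑ i, ∑ j, M i j ^ 2) * ∑ j, v j ^ 2 := by
  rw [sum_mul]
  exact sum_le_sum fun i _ => sum_mul_sq_le_sq_mul_sq univ (M i) v

theorem sum_sq_affine_sub_le {m n : Type*} [Fintype m] [Fintype n] (M : Matrix m n ℝ)
    (c : m → ℝ) (a : ℝ) {g : (n → ℝ) → m → ℝ} (hg : ∀ x, g x = a • (M *ᵥ x) + c)
    (x y : n → ℝ) :
    ∑ i, (g y i - g x i) ^ 2 ≤ a ^ 2 * ((∑ i, ∑ j, M i j ^ 2) * ∑ j, (y j - x j) ^ 2) := by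
  have hdiff i : g y i - g x i = a * (M *ᵥ (y - x)) i := by
    simp only [hg, mulVec_sub, Pi.add_apply, Pi.smul_apply, Pi.sub_apply, smul_eq_mul]
    ring
  calc ∑ i, (g y i - g x i) ^ 2 = a ^ 2 * ∑ i, (M *ᵥ (y - x)) i ^ 2 := by
        simp only [hdiff, mul_pow, mul_sum]
    _ ≤ a ^ 2 * ((∑ i, ∑ j, M i j ^ 2) * ∑ j, (y j - x j) ^ 2) := by
        gcongr
        exact sum_sq_mulVec_le M (y - x)

theorem sum_sq_neg_part_le {ι : Type*} [Fintype ι] [DecidableEq ι] (s : Finset ι)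
    (a b : ι → ℝ) (ha : ∀ i ∈ s, 0 ≤ a i) :
    ∑ i, max 0 (-a i) ^ 2 ≤ 2 * ∑ i ∈ sᶜ, b i ^ 2 + 2 * ∑ i, (b i - a i) ^ 2 := by
  have hs : ∑ i ∈ s, max 0 (-a i) ^ 2 = 0 :=
    sum_eq_zero fun i hi => by simp [max_eq_left (neg_nonpos.mpr (ha i hi))]
  have hsc : ∑ i ∈ sᶜ, max 0 (-a i) ^ 2 ≤ ∑ i ∈ sᶜ, (2 * b i ^ 2 + 2 * (b i - a i) ^ 2) := by
    refine sum_le_sum fun i _ => ?_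
    have hneg : max 0 (-a i) ^ 2 ≤ a i ^ 2 := by
      rcases le_total 0 (a i) with h | h
      · simp [max_eq_left (neg_nonpos.mpr h), sq_nonneg]
      · simp [max_eq_right (neg_nonneg.mpr h)]
    nlinarith [sq_nonneg (2 * b i - a i)]
  have hsub : ∑ i ∈ sᶜ, (b i - a i) ^ 2 ≤ ∑ i, (b i - a i) ^ 2 :=
    sum_le_sum_of_subset_of_nonneg (subset_univ _) fun i _ _ => sq_nonneg _
  rw [← sum_add_sum_compl s, hs, zero_add]
  rw [sum_add_distrib, ← mul_sum, ← mul_sum] at hsc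
  linarith

theorem stmt_19_general {n : ℕ} (Q : Matrix (Fin n) (Fin n) ℝ)
    (c : Fin n → ℝ)
    (q : (Fin n → ℝ) → ℝ)
    (g : (Fin n → ℝ) → (Fin n → ℝ)) (hg : ∀ x, g x = (2 : ℝ) • (Q *ᵥ x) + c)
    (hbdd : ∃ B : ℝ, ∀ x : Fin n → ℝ, (∀ i, 0 ≤ x i) → B ≤ q x)
    (ε σ₁ : ℝ) (hε : 0 < ε) (hσ₁ : 0 < σ₁)
    (x xt : ℕ → Fin n → ℝ) (A : ℕ → Finset (Fin n))
    (hxnn : ∀ k i, 0 ≤ x k i)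
    (hgA : ∀ k, ∀ i ∈ A k, 0 ≤ g (x k) i)
    (hdec : ∀ k, q (x (k + 1)) ≤ q (x k) - (1 / (2 * ε)) * (∑ i, (xt k i - x k i) ^ 2)
      - σ₁ * ∑ i ∈ (A k)ᶜ, (g (xt k) i) ^ 2) :
    Tendsto (fun k => Real.sqrt (∑ i, max 0 (-(g (x k) i)) ^ 2)) atTop (nhds 0) := by
  obtain ⟨B, hB⟩ := hbdd
  set step := fun k => ∑ i, (xt k i - x k i) ^ 2
  set grad := fun k => ∑ i ∈ (A k)ᶜ, g (xt k) i ^ 2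
  have hstep_nn k : 0 ≤ step k := sum_nonneg fun i _ => sq_nonneg _
  have hgrad_nn k : 0 ≤ grad k := sum_nonneg fun i _ => sq_nonneg _
  have hε' : 0 < 1 / (2 * ε) := by positivity
  have hdecrease : Tendsto (fun k => 1 / (2 * ε) * step k + σ₁ * grad k) atTop (nhds 0) :=
    tendsto_zero_of_le_sub_succ
      (fun k => add_nonneg (mul_nonneg hε'.le (hstep_nn k)) (mul_nonneg hσ₁.le (hgrad_nn k)))
      (fun k => by linarith [hdec k]) (fun k => hB _ (hxnn k))
  have hstep : Tendsto step atTop (nhds 0) := tendsto_zero_of_mul_le hε' hstep_nn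
    (fun k => le_add_of_nonneg_right (mul_nonneg hσ₁.le (hgrad_nn k))) hdecrease
  have hgrad : Tendsto grad atTop (nhds 0) := tendsto_zero_of_mul_le hσ₁ hgrad_nn
    (fun k => le_add_of_nonneg_left (mul_nonneg hε'.le (hstep_nn k))) hdecrease
  set C := ∑ i, ∑ j, Q i j ^ 2
  have hresidual_le k : ∑ i, max 0 (-(g (x k) i)) ^ 2 ≤ 2 * grad k + 8 * C * step k := by
    linarith [sum_sq_neg_part_le (A k) _ (g (xt k)) (hgA k),
      sum_sq_affine_sub_le Q c 2 hg (x k) (xt k)]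
  have hresidual : Tendsto (fun k => ∑ i, max 0 (-(g (x k) i)) ^ 2) atTop (nhds 0) := by
    refine squeeze_zero (fun k => sum_nonneg fun i _ => sq_nonneg _) hresidual_le ?_
    simpa using (hgrad.const_mul 2).add (hstep.const_mul (8 * C))
  simpa [Function.comp_def] using (Real.continuous_sqrt.tendsto 0).comp hresidual

/-- Convergence of the projected gradient residual for a sequence with the
sufficient-decrease property of FAST-QPA. -/
theorem stmt_19 {n : ℕ} (Q : Matrix (Fin n) (Fin n) ℝ) (hQ : Q.PosSemidef)
    (c : Fin n → ℝ)
    (q : (Fin n → ℝ) → ℝ) (hq : ∀ x, q x = x ⬝ᵥ (Q *ᵥ x) + c ⬝ᵥ x)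
    (g : (Fin n → ℝ) → (Fin n → ℝ)) (hg : ∀ x, g x = (2 : ℝ) • (Q *ᵥ x) + c)
    (hbdd : ∃ B : ℝ, ∀ x : Fin n → ℝ, (∀ i, 0 ≤ x i) → B ≤ q x)
    (ε σ₁ : ℝ) (hε : 0 < ε) (hσ₁ : 0 < σ₁)
    (x xt : ℕ → Fin n → ℝ) (A : ℕ → Finset (Fin n))
    (hxnn : ∀ k i, 0 ≤ x k i)
    (hxt : ∀ k i, xt k i = if i ∈ A k then 0 else x k i)
    (hgA : ∀ k, ∀ i ∈ A k, 0 ≤ g (x k) i)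
    (hdec : ∀ k, q (x (k + 1)) ≤ q (x k) - (1 / (2 * ε)) * (∑ i, (xt k i - x k i) ^ 2)
      - σ₁ * ∑ i ∈ (A k)ᶜ, (g (xt k) i) ^ 2) :
    Tendsto (fun k => Real.sqrt (∑ i, max 0 (-(g (x k) i)) ^ 2)) atTop (nhds 0) :=
  stmt_19_general Q c q g hg hbdd ε σ₁ hε hσ₁ x xt A hxnn hgA hdec
end
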